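/- The identity B_1(θ)sin θ = 1 + (1/2)cos θ + Σ_{r=1}^∞ ((−1)^{r+1} B_{2r}(θ) + 2 cos θ) holds for all θ ∈ 𝕋, θ ≠ 0, where B_m are the Bernoulli kernels and the series converges absolutely and uniformly. -/

import Mathlib

noncomputable def Bern (m : ℕ) (θ : ℝ) : ℂ :=
  if m = 1 then
    ((Real.pi - θ + 2 * Real.pi * (⌊θ / (2 * Real.pi)⌋ : ℤ) : ℝ) : ℂ)
  else
    ∑' k : ℤ, if k = 0 then 0 else Complex.exp (k * θ * Complex.I) / (Complex.I * k) ^ m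

/-!
The `2π`-periodic function equal to `(π - x) sin x` on `[0, 2π)` is `B₁(θ) sin θ`. It is
continuous, with Fourier coefficients `1` at `0`, `1/4` at `±1` and `1 / (1 - k²)` for
`|k| ≥ 2`; these are summable, so its Fourier series converges to it at every point. For
`|k| ≥ 2` expand `1 / (1 - k²) = -∑_{r ≥ 0} k^{-2(r+1)}` and exchange the two sums, which is
legitimate because `|k|^{-2(r+1)} ≤ 4^{-r} k^{-2}`. For fixed `r` the sum over `|k| ≥ 2` is
`2 cos θ - (-1)^{r+1} B_{2r+2}(θ)`: the full sum over `k ≠ 0` is `(-1)^{r+1} B_{2r+2}(θ)`, and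
the terms `k = ±1` contribute `2 cos θ`.
-/

open Real
open Complex (I)
open scoped Complex

instance fact_zero_lt_two_pi : Fact (0 < 2 * π) := ⟨two_pi_pos⟩

theorem two_pi_mul_I_mul_mul_div_two_pi (a b : ℂ) :
    2 * π * I * a * b / ((2 * π : ℝ) : ℂ) = a * b * I := by
  have : (π : ℂ) ≠ 0 := by exact_mod_cast pi_ne_zero
  push_cast
  field_simp

theorem integral_exp_int_mul_I {m : ℤ} (hm : m ≠ 0) :
    ∫ x in (0 : ℝ)..2 * π, cexp (m * x * I) = 0 := by
  have hmI : (m : ℂ) * I ≠ 0 := by simp [hm]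
  simp_rw [mul_right_comm _ _ I]
  rw [integral_exp_mul_complex hmI, Complex.ofReal_zero, mul_zero, Complex.exp_zero,
    show (m : ℂ) * I * ((2 * π : ℝ) : ℂ) = m * (2 * π * I) by push_cast; ring,
    Complex.exp_int_mul_two_pi_mul_I, sub_self, zero_div]

theorem integral_ofReal_mul_exp_int_mul_I {m : ℤ} (hm : m ≠ 0) :
    ∫ x in (0 : ℝ)..2 * π, (x : ℂ) * cexp (m * x * I) = 2 * π / (m * I) := by
  have hmI : (m : ℂ) * I ≠ 0 := by simp [hm]
  have hderiv (x : ℝ) : HasDerivAt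
      (fun x : ℝ => cexp (m * x * I) * ((x : ℂ) / (m * I) - 1 / (m * I) ^ 2))
      ((x : ℂ) * cexp (m * x * I)) x := by
    have hx : HasDerivAt (fun x : ℝ => (x : ℂ)) 1 x := (hasDerivAt_id x).ofReal_comp
    have he : HasDerivAt (fun x : ℝ => cexp (m * x * I)) (cexp (m * x * I) * (m * I)) x := by
      simpa [mul_right_comm _ _ I] using ((hx.const_mul ((m : ℂ) * I)).cexp)
    refine (he.mul ((hx.div_const ((m : ℂ) * I)).sub_const (1 / (m * I) ^ 2))).congr_deriv ?_
    field_simp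
    ring
  rw [intervalIntegral.integral_eq_sub_of_hasDerivAt (fun x _ => hderiv x)
    (by apply Continuous.intervalIntegrable; fun_prop)]
  rw [show (m : ℂ) * ((2 * π : ℝ) : ℂ) * I = m * (2 * π * I) by push_cast; ring,
    Complex.exp_int_mul_two_pi_mul_I]
  push_cast
  field_simp
  simp

theorem integral_pi_sub_mul_exp_int_mul_I (m : ℤ) :
    ∫ x in (0 : ℝ)..2 * π, ((π : ℂ) - x) * cexp (m * x * I) =
      if m = 0 then 0 else 2 * π * I / m := by
  simp_rw [sub_mul]
  rw [intervalIntegral.integral_sub (by apply Continuous.intervalIntegrable; fun_prop)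
    (by apply Continuous.intervalIntegrable; fun_prop), intervalIntegral.integral_const_mul]
  split_ifs with hm
  · subst hm
    simp only [Int.cast_zero, zero_mul, Complex.exp_zero, mul_one, intervalIntegral.integral_const]
    rw [intervalIntegral.integral_ofReal, integral_id, Complex.real_smul]
    push_cast
    ring
  · rw [integral_exp_int_mul_I hm, integral_ofReal_mul_exp_int_mul_I hm]
    have : (m : ℂ) ≠ 0 := by exact_mod_cast hm
    field_simp
    rw [Complex.I_sq]
    ring

noncomputable def piSubMulSin (x : ℝ) : ℂ := (π - x) * Complex.sin x

noncomputable def piSubMulSinCoeff (n : ℤ) : ℂ :=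
  if n = 1 ∨ n = -1 then 1 / 4 else 1 / (1 - n ^ 2)

theorem exp_neg_int_mul_piSubMulSin (n : ℤ) (x : ℝ) :
    cexp (((-n : ℤ) : ℂ) * x * I) * piSubMulSin x =
      (((π : ℂ) - x) * cexp (((1 - n : ℤ) : ℂ) * x * I) -
        ((π : ℂ) - x) * cexp (((-1 - n : ℤ) : ℂ) * x * I)) / (2 * I) := by
  have e₁ : cexp (((1 - n : ℤ) : ℂ) * x * I) =
      cexp (x * I) * cexp (((-n : ℤ) : ℂ) * x * I) := by
    rw [← Complex.exp_add]; push_cast; ring_nf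
  have e₂ : cexp (((-1 - n : ℤ) : ℂ) * x * I) =
      cexp (-x * I) * cexp (((-n : ℤ) : ℂ) * x * I) := by
    rw [← Complex.exp_add]; push_cast; ring_nf
  rw [e₁, e₂, piSubMulSin, Complex.sin, eq_div_iff (by simp)]
  ring_nf
  rw [Complex.I_sq]
  ring

theorem fourierCoeff_piSubMulSin (n : ℤ) :
    fourierCoeff (AddCircle.liftIco (2 * π) 0 piSubMulSin) n = piSubMulSinCoeff n := by
  rw [fourierCoeff_liftIco_eq, fourierCoeffOn_eq_integral]
  simp only [smul_eq_mul, fourier_coe_apply, zero_add, sub_zero, two_pi_mul_I_mul_mul_div_two_pi,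
    exp_neg_int_mul_piSubMulSin]
  rw [intervalIntegral.integral_div, intervalIntegral.integral_sub
    (by apply Continuous.intervalIntegrable; fun_prop)
    (by apply Continuous.intervalIntegrable; fun_prop),
    integral_pi_sub_mul_exp_int_mul_I, integral_pi_sub_mul_exp_int_mul_I, piSubMulSinCoeff,
    Complex.real_smul]
  have hπ : (π : ℂ) ≠ 0 := by exact_mod_cast pi_ne_zero
  by_cases h₁ : n = 1
  · subst h₁
    rw [if_pos (by norm_num), if_neg (by norm_num), if_pos (by norm_num)]
    push_cast
    field_simp
    ring
  by_cases h₂ : n = -1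
  · subst h₂
    rw [if_neg (by norm_num), if_pos (by norm_num), if_pos (by norm_num)]
    push_cast
    field_simp
    ring
  have h₃ : (1 : ℂ) - n ≠ 0 := by rw [sub_ne_zero]; exact_mod_cast (Ne.symm h₁)
  have h₄ : (-1 : ℂ) - n ≠ 0 := by rw [sub_ne_zero]; exact_mod_cast (Ne.symm h₂)
  rw [if_neg (by omega), if_neg (by omega), if_neg (by tauto),
    show (1 : ℂ) - n ^ 2 = -((1 - n) * (-1 - n)) by ring]
  push_cast
  field_simp
  ring

theorem continuous_liftIco_piSubMulSin :
    Continuous (AddCircle.liftIco (2 * π) 0 piSubMulSin) := by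
  refine AddCircle.liftIco_continuous ?_ (by unfold piSubMulSin; fun_prop)
  simp [piSubMulSin]

theorem liftIco_piSubMulSin_coe (θ : ℝ) :
    AddCircle.liftIco (2 * π) 0 piSubMulSin θ = Bern 1 θ * Real.sin θ := by
  set t := toIcoMod two_pi_pos 0 θ
  have hθ : θ = t + ⌊θ / (2 * π)⌋ * (2 * π) := by
    have := self_sub_toIcoDiv_zsmul two_pi_pos 0 θ
    rw [toIcoDiv_eq_floor, sub_zero, zsmul_eq_mul] at this
    linarith
  have hcoe : (θ : AddCircle (2 * π)) = t := by
    nth_rewrite 1 [hθ]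
    rw [AddCircle.coe_add, ← zsmul_eq_mul, AddCircle.coe_zsmul, AddCircle.coe_period, smul_zero,
      add_zero]
  have hsin : Real.sin θ = Real.sin t := by
    nth_rewrite 1 [hθ]
    exact Real.sin_add_int_mul_two_pi t _
  have hBern : Bern 1 θ = π - t := by
    rw [Bern, if_pos rfl, ← Complex.ofReal_sub]
    congr 1
    linarith
  rw [hcoe, AddCircle.liftIco_coe_apply (toIcoMod_mem_Ico two_pi_pos 0 θ), piSubMulSin, hBern,
    hsin, Complex.ofReal_sin]

theorem four_le_sq_of_notMem_Icc {k : ℤ} (hk : k ∉ Finset.Icc (-1) 1) :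
    (4 : ℝ) ≤ k ^ 2 := by
  have : (4 : ℤ) ≤ k ^ 2 := by
    rw [Finset.mem_Icc, not_and_or, not_le, not_le] at hk
    rcases hk with hk | hk <;> nlinarith
  exact_mod_cast this

theorem piSubMulSinCoeff_of_notMem_Icc {k : ℤ} (hk : k ∉ Finset.Icc (-1) 1) :
    piSubMulSinCoeff k = 1 / (1 - k ^ 2) :=
  if_neg (by simp only [Finset.mem_Icc] at hk; omega)

theorem summable_piSubMulSinCoeff : Summable piSubMulSinCoeff := by
  refine Summable.of_norm_bounded_eventually (g := fun n : ℤ => 2 / (n : ℝ) ^ 2) ?_ ?_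
  · simpa [div_eq_mul_inv] using (Real.summable_one_div_int_pow.mpr one_lt_two).mul_left 2
  · filter_upwards [(Finset.Icc (-1 : ℤ) 1).eventually_cofinite_notMem] with n hn
    have h4 := four_le_sq_of_notMem_Icc hn
    rw [piSubMulSinCoeff_of_notMem_Icc hn,
      show (1 : ℂ) - n ^ 2 = ((1 - (n : ℝ) ^ 2 : ℝ) : ℂ) by push_cast; rfl,
      norm_div, norm_one, Complex.norm_real, Real.norm_eq_abs, abs_of_neg (by linarith),
      div_le_div_iff₀ (by linarith) (by linarith)]
    linarith

theorem hasSum_piSubMulSinCoeff_mul_exp (θ : ℝ) :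
    HasSum (fun n : ℤ => piSubMulSinCoeff n * cexp (n * θ * I)) (Bern 1 θ * Real.sin θ) := by
  let F : C(AddCircle (2 * π), ℂ) := ⟨_, continuous_liftIco_piSubMulSin⟩
  have hF : Summable (fourierCoeff F) := by
    convert summable_piSubMulSinCoeff using 1
    exact funext fourierCoeff_piSubMulSin
  simpa only [F, ContinuousMap.coe_mk, fourierCoeff_piSubMulSin, liftIco_piSubMulSin_coe,
    fourier_coe_apply, two_pi_mul_I_mul_mul_div_two_pi, smul_eq_mul]
    using has_pointwise_sum_fourier_series_of_summable hF θ

theorem sum_Icc_piSubMulSinCoeff_mul_exp (θ : ℝ) :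
    ∑ k ∈ Finset.Icc (-1 : ℤ) 1, piSubMulSinCoeff k * cexp (k * θ * I) =
      1 + 1 / 2 * Real.cos θ := by
  rw [show Finset.Icc (-1 : ℤ) 1 = {-1, 0, 1} by rfl, Finset.sum_insert (by decide),
    Finset.sum_insert (by decide), Finset.sum_singleton]
  have h₀ : piSubMulSinCoeff 0 = 1 := by simp [piSubMulSinCoeff]
  have h₁ : piSubMulSinCoeff 1 = 1 / 4 := by simp [piSubMulSinCoeff]
  have hneg : piSubMulSinCoeff (-1) = 1 / 4 := by simp [piSubMulSinCoeff]
  rw [h₀, h₁, hneg, Complex.ofReal_cos, Complex.cos]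
  push_cast
  rw [zero_mul, zero_mul, Complex.exp_zero]
  ring_nf

local notation "𝒦" => {k : ℤ // k ∉ Finset.Icc (-1 : ℤ) 1}

theorem hasSum_exp_div_one_sub_sq_compl (θ : ℝ) :
    HasSum (fun k : 𝒦 => cexp (k * θ * I) / (1 - k ^ 2))
      (Bern 1 θ * Real.sin θ - (1 + 1 / 2 * Real.cos θ)) := by
  have h := (Finset.hasSum_compl_iff (Finset.Icc (-1 : ℤ) 1)).mpr
    (by rw [sum_Icc_piSubMulSinCoeff_mul_exp, sub_add_cancel]
        exact hasSum_piSubMulSinCoeff_mul_exp θ)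
  refine h.congr_fun fun k => ?_
  rw [piSubMulSinCoeff_of_notMem_Icc k.2]
  ring

/-- Vanishes at `k = 0` because `0⁻¹ = 0`, so it matches the `k ≠ 0` terms of `Bern` without a
case split. -/
noncomputable def bernTerm (r : ℕ) (θ : ℝ) (k : ℤ) : ℂ :=
  cexp (k * θ * I) * ((k : ℂ) ^ 2)⁻¹ ^ (r + 1)

theorem Bern_two_mul_succ (r : ℕ) (θ : ℝ) :
    Bern (2 * (r + 1)) θ = (-1) ^ (r + 1) * ∑' k : ℤ, bernTerm r θ k := by
  rw [Bern, if_neg (by omega), ← tsum_mul_left]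
  congr 1 with k
  split_ifs with hk
  · simp [bernTerm, hk]
  · rw [bernTerm, div_eq_mul_inv, mul_pow, pow_mul, pow_mul, Complex.I_sq, mul_inv, ← inv_pow,
      inv_neg_one]
    ring

theorem sum_Icc_bernTerm (r : ℕ) (θ : ℝ) :
    ∑ k ∈ Finset.Icc (-1 : ℤ) 1, bernTerm r θ k = 2 * Real.cos θ := by
  rw [show Finset.Icc (-1 : ℤ) 1 = {-1, 0, 1} by rfl, Finset.sum_insert (by decide),
    Finset.sum_insert (by decide), Finset.sum_singleton]
  have h₀ : bernTerm r θ 0 = 0 := by simp [bernTerm]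
  have h₁ : bernTerm r θ 1 = cexp (θ * I) := by simp [bernTerm]
  have hneg : bernTerm r θ (-1) = cexp (-θ * I) := by simp [bernTerm]
  rw [h₀, h₁, hneg, Complex.ofReal_cos, Complex.cos]
  ring

theorem norm_bernTerm_le (r : ℕ) (θ : ℝ) {k : ℤ} (hk : k ∉ Finset.Icc (-1) 1) :
    ‖bernTerm r θ k‖ ≤ (1 / 4) ^ r * ((k : ℝ) ^ 2)⁻¹ := by
  have h4 := four_le_sq_of_notMem_Icc hk
  have hnorm : ‖bernTerm r θ k‖ = ((k : ℝ) ^ 2)⁻¹ ^ r * ((k : ℝ) ^ 2)⁻¹ := by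
    rw [bernTerm, norm_mul, ← Complex.ofReal_intCast, ← Complex.ofReal_mul,
      Complex.norm_exp_ofReal_mul_I, one_mul, pow_succ, norm_mul, norm_pow,
      norm_inv, norm_pow, Complex.norm_real, Real.norm_eq_abs, sq_abs]
  rw [hnorm]
  gcongr
  rw [one_div]
  exact inv_anti₀ (by norm_num) h4

theorem summable_inv_sq_compl_Icc :
    Summable (fun k : 𝒦 => ((k : ℝ) ^ 2)⁻¹) :=
  (by simpa using Real.summable_one_div_int_pow.mpr one_lt_two :
    Summable fun k : ℤ => ((k : ℝ) ^ 2)⁻¹).subtype _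

theorem summable_norm_bernTerm (θ : ℝ) :
    Summable (fun p : ℕ × 𝒦 => ‖bernTerm p.1 θ p.2‖) :=
  .of_nonneg_of_le (fun _ => norm_nonneg _) (fun p => norm_bernTerm_le p.1 θ p.2.2)
    ((summable_geometric_of_lt_one (by norm_num) (by norm_num)).mul_of_nonneg
      summable_inv_sq_compl_Icc (fun _ => by positivity) (fun _ => by positivity))

noncomputable def quasiBernoulliTerm (r : ℕ) (θ : ℝ) : ℂ :=
  (-1) ^ (r + 2) * Bern (2 * (r + 1)) θ + 2 * Real.cos θ

theorem hasSum_neg_bernTerm_compl (r : ℕ) (θ : ℝ) :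
    HasSum (fun k : 𝒦 => -bernTerm r θ k) (quasiBernoulliTerm r θ) := by
  have hs : Summable (fun k : 𝒦 => bernTerm r θ k) :=
    .of_norm_bounded (summable_inv_sq_compl_Icc.mul_left ((1 / 4) ^ r))
      (fun k => norm_bernTerm_le r θ k.2)
  have h := (Finset.hasSum_compl_iff (Finset.Icc (-1 : ℤ) 1) (f := bernTerm r θ)).mpr
    (by rw [sum_Icc_bernTerm, sub_add_cancel]; exact ((Finset.summable_compl_iff _).mp hs).hasSum)
  have hsign : (-1 : ℂ) ^ (r + 2) * (-1) ^ (r + 1) = -1 := by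
    rw [← pow_add, show r + 2 + (r + 1) = 2 * (r + 1) + 1 by ring, pow_succ, pow_mul]
    norm_num
  rw [quasiBernoulliTerm, Bern_two_mul_succ, ← mul_assoc, hsign,
    show ∀ x y : ℂ, -1 * x + y = -(x - y) from fun x y => by ring]
  exact h.neg

theorem hasSum_neg_bernTerm_geometric (θ : ℝ) {k : ℤ} (hk : k ∉ Finset.Icc (-1) 1) :
    HasSum (fun r : ℕ => -bernTerm r θ k) (cexp (k * θ * I) / (1 - k ^ 2)) := by
  have h4 := four_le_sq_of_notMem_Icc hk
  have hnorm : ‖(k : ℂ) ^ 2‖ = (k : ℝ) ^ 2 := by rw [norm_pow, Complex.norm_intCast, sq_abs]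
  have hk0 : (k : ℂ) ≠ 0 := fun h => by
    rw [h, zero_pow two_ne_zero, norm_zero] at hnorm; linarith
  have hq : ‖((k : ℂ) ^ 2)⁻¹‖ < 1 := by
    rw [norm_inv, hnorm]; exact inv_lt_one_of_one_lt₀ (by linarith)
  have hsum : cexp (k * θ * I) / (1 - k ^ 2) =
      -(cexp (k * θ * I) * ((k : ℂ) ^ 2)⁻¹) * (1 - ((k : ℂ) ^ 2)⁻¹)⁻¹ := by
    generalize cexp (k * θ * I) = e
    rw [neg_mul, mul_assoc, ← mul_inv, mul_sub, mul_one, mul_inv_cancel₀ (pow_ne_zero 2 hk0),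
      ← mul_neg, ← inv_neg, neg_sub, div_eq_mul_inv]
  rw [hsum]
  refine ((hasSum_geometric_of_norm_lt_one hq).mul_left _).congr_fun fun r => ?_
  rw [bernTerm, pow_succ']
  ring

theorem summable_norm_quasiBernoulliTerm (θ : ℝ) :
    Summable fun r : ℕ => ‖quasiBernoulliTerm r θ‖ := by
  refine .of_nonneg_of_le (fun _ => norm_nonneg _) (fun r => ?_)
    ((summable_geometric_of_lt_one (r := 1 / 4) (by norm_num) (by norm_num)).mul_right
      (∑' k : 𝒦, ((k : ℝ) ^ 2)⁻¹))
  exact (hasSum_neg_bernTerm_compl r θ).norm_le_of_bounded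
    (summable_inv_sq_compl_Icc.hasSum.mul_left _) fun k => by
      rw [norm_neg]; exact norm_bernTerm_le r θ k.2

theorem Bern_one_mul_sin_eq_tsum (θ : ℝ) :
    Bern 1 θ * Real.sin θ = 1 + 1 / 2 * Real.cos θ + ∑' r : ℕ, quasiBernoulliTerm r θ := by
  have hF : Summable (Function.uncurry fun (r : ℕ) (k : 𝒦) => -bernTerm r θ k) :=
    (summable_norm_bernTerm θ).of_norm.neg
  calc Bern 1 θ * Real.sin θ
      = 1 + 1 / 2 * Real.cos θ + ∑' k : 𝒦, cexp (k * θ * I) / (1 - k ^ 2) := by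
        rw [(hasSum_exp_div_one_sub_sq_compl θ).tsum_eq]; ring
    _ = 1 + 1 / 2 * Real.cos θ + ∑' (k : 𝒦) (r : ℕ), -bernTerm r θ k := by
        congr 1
        exact tsum_congr fun k => (hasSum_neg_bernTerm_geometric θ k.2).tsum_eq.symm
    _ = 1 + 1 / 2 * Real.cos θ + ∑' (r : ℕ) (k : 𝒦), -bernTerm r θ k := by
        rw [hF.tsum_comm]
    _ = 1 + 1 / 2 * Real.cos θ + ∑' r : ℕ, quasiBernoulliTerm r θ := by
        congr 1
        exact tsum_congr fun r => (hasSum_neg_bernTerm_compl r θ).tsum_eq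

theorem quasiBernoulli_K2_series_general (θ : ℝ) :
    Summable (fun r : ℕ =>
      ‖(-1 : ℂ) ^ (r + 2) * Bern (2 * (r + 1)) θ + 2 * (Real.cos θ : ℂ)‖) ∧
    Bern 1 θ * (Real.sin θ : ℂ) =
      1 + (1 / 2) * (Real.cos θ : ℂ) +
        ∑' r : ℕ, ((-1 : ℂ) ^ (r + 2) * Bern (2 * (r + 1)) θ + 2 * (Real.cos θ : ℂ)) :=
  ⟨summable_norm_quasiBernoulliTerm θ, Bern_one_mul_sin_eq_tsum θ⟩

/-- `B_1(θ)sin θ = 1 + (1/2)cos θ + Σ_{r≥1} ((−1)^{r+1} B_{2r}(θ) + 2 cos θ)` for `θ ≠ 0`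
on `𝕋`, with absolute convergence of the series. -/
theorem quasiBernoulli_K2_series (θ : ℝ) (h1 : 0 < θ) (h2 : θ < 2 * Real.pi) :
    Summable (fun r : ℕ =>
      ‖(-1 : ℂ) ^ (r + 2) * Bern (2 * (r + 1)) θ + 2 * (Real.cos θ : ℂ)‖) ∧
    Bern 1 θ * (Real.sin θ : ℂ) =
      1 + (1 / 2) * (Real.cos θ : ℂ) +
        ∑' r : ℕ, ((-1 : ℂ) ^ (r + 2) * Bern (2 * (r + 1)) θ + 2 * (Real.cos θ : ℂ)) :=
  quasiBernoulli_K2_series_general θ
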